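/- With the construction below, let P be a maximal two-sided ideal of B such that B/P is finite-dimensional over F and A_0 ⊄ P. Then there exist n ∈ S and 1 ≤ i ≤ a_n such that P is the kernel of the restriction of θ_{n,i} to B; in particular B/P ≅ M_n(F). -/

import Mathlib

open Matrix

/-- The `n×n` cyclic permutation matrix: identity block `I_{n-1}` in the upper right and
a `1` in the lower-left corner. -/
def cycMat (F : Type*) [Semiring F] (n : ℕ) : Matrix (Fin n) (Fin n) F :=
  Matrix.of fun k l => if (l : ℕ) = ((k : ℕ) + 1) % n then 1 else 0

/-- The matrix unit `E₁₁`, with `1` in the upper-left entry and zeros elsewhere. -/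
def e11 (F : Type*) [Semiring F] (n : ℕ) : Matrix (Fin n) (Fin n) F :=
  Matrix.of fun k l => if (k : ℕ) = 0 ∧ (l : ℕ) = 0 then 1 else 0

/-- Index set: pairs `(n, i)` with `n ≥ 2` and `1 ≤ i ≤ a n` (here `0`-indexed: `i < a n`).
Note that `n` lies in the support `S` of `a` automatically, since `i < a n` forces `a n ≠ 0`. -/
abbrev Idx (a : ℕ → ℕ) : Type := {p : ℕ × ℕ // 2 ≤ p.1 ∧ p.2 < a p.1}

/-- The ambient algebra `A = ∏_{n ∈ S} ∏_{i=1}^{a n} M_n(F)`. -/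
abbrev ConstrA (F : Type*) [Field F] (a : ℕ → ℕ) : Type _ :=
  ∀ p : Idx a, Matrix (Fin p.1.1) (Fin p.1.1) F

/-- The element `e` whose `(n,i)` component is `λ_{n,i} • E₁₁`. -/
def elemE {F : Type*} [Field F] (a : ℕ → ℕ) (lam : Idx a → F) : ConstrA F a :=
  fun p => lam p • e11 F p.1.1

/-- The element `σ` whose `(n,i)` component is the cyclic permutation matrix `P_n`. -/
def elemS (F : Type*) [Field F] (a : ℕ → ℕ) : ConstrA F a :=
  fun p => cycMat F p.1.1
/-- `B = F⟨e, σ⟩`, the unital `F`-subalgebra of `A` generated by `e` and `σ`. -/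
abbrev ConstrB (F : Type*) [Field F] (a : ℕ → ℕ) (lam : Idx a → F) :
    Subalgebra F (ConstrA F a) :=
  Algebra.adjoin F {elemE a lam, elemS F a}

set_option maxHeartbeats 1000000
set_option synthInstance.maxHeartbeats 400000

/-!
Because the `λ_{n,i}` are nonzero and pairwise distinct up to sign, every idempotent
`Pi.single q 1` lies in `B`. By induction on the size `n = q.1.1`: in the component `r`,
`e σ^n e` equals `λ_r² E₁₁` when `r.1.1 ∣ n` and `0` otherwise, so multiplying by `1` minus the
(already available) idempotents of smaller size leaves the element `λ_r² E₁₁` on the components of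
size `n`; a polynomial in it without constant term isolates the single component `q`, and
`∑ⱼ P_n^(n-j) E₁₁ P_n^j = 1` turns `E₁₁` into the identity there.

If `A₀ ⊄ P`, some central idempotent `Pi.single p 1` is not in `P`, and maximality gives
`P + B · Pi.single p 1 = B`, whence `ker θ_p ⊆ P`. As `θ_p` maps `B` onto the simple ring
`M_n(F)`, the image of `P` is a proper two-sided ideal there, hence zero, so `P = ker θ_p`.
-/

section TwoSidedIdeal

variable {R S : Type*} [Ring R] [Ring S]

theorem Ideal.mem_of_mul_eq_zero_of_central {P : Ideal R} [P.IsTwoSided]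
    (hPmax : ∀ Q : Ideal R, Q.IsTwoSided → P < Q → Q = ⊤) {c : R} (hc : ∀ t, t * c = c * t)
    (hcP : c ∉ P) {k : R} (hk : k * c = 0) : k ∈ P := by
  have hQ : (P ⊔ Ideal.span {c}).IsTwoSided := by
    refine ⟨fun b hx => ?_⟩
    obtain ⟨u, hu, v, hv, rfl⟩ := Submodule.mem_sup.mp hx
    obtain ⟨t, rfl⟩ := Ideal.mem_span_singleton'.mp hv
    rw [add_mul, mul_assoc, ← hc b, ← mul_assoc]
    exact Submodule.add_mem_sup (Ideal.mul_mem_right b P hu)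
      (Ideal.mul_mem_left _ _ (Ideal.mem_span_singleton_self c))
  have hlt : P < P ⊔ Ideal.span {c} :=
    lt_of_le_of_ne le_sup_left fun h =>
      hcP (h ▸ Submodule.mem_sup_right (Ideal.mem_span_singleton_self c))
  obtain ⟨u, hu, v, hv, huv⟩ :=
    Submodule.mem_sup.mp ((Ideal.eq_top_iff_one _).mp (hPmax _ hQ hlt))
  obtain ⟨t, rfl⟩ := Ideal.mem_span_singleton'.mp hv
  have hkt : k * (t * c) = 0 := by rw [hc, ← mul_assoc, hk, zero_mul]
  rw [← mul_one k, ← huv, mul_add, hkt, add_zero]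
  exact P.mul_mem_left k hu

theorem Ideal.eq_ker_of_ker_le [IsSimpleRing S] {P : Ideal R} [P.IsTwoSided] (hP : P ≠ ⊤)
    {f : R →+* S} (hf : Function.Surjective f) (hker : RingHom.ker f ≤ P) :
    P = RingHom.ker f := by
  let J : TwoSidedIdeal S := .mk' (f '' P) ⟨0, P.zero_mem, map_zero f⟩
    (by rintro _ _ ⟨x, hx, rfl⟩ ⟨y, hy, rfl⟩; exact ⟨x + y, P.add_mem hx hy, map_add f x y⟩)
    (by rintro _ ⟨x, hx, rfl⟩; exact ⟨-x, P.neg_mem hx, map_neg f x⟩)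
    (by
      rintro s _ ⟨y, hy, rfl⟩
      obtain ⟨x, rfl⟩ := hf s
      exact ⟨x * y, P.mul_mem_left x hy, map_mul f x y⟩)
    (by
      rintro _ s ⟨x, hx, rfl⟩
      obtain ⟨y, rfl⟩ := hf s
      exact ⟨x * y, P.mul_mem_right y hx, map_mul f x y⟩)
  refine le_antisymm (fun z hz => ?_) hker
  rcases eq_bot_or_eq_top J with hJ | hJ
  · have : f z ∈ J := (TwoSidedIdeal.mem_mk' _ _ _ _ _ _ _).mpr ⟨z, hz, rfl⟩
    rwa [hJ, TwoSidedIdeal.mem_bot, ← RingHom.mem_ker] at this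
  · obtain ⟨x, hx, hx1⟩ :=
      (TwoSidedIdeal.mem_mk' _ _ _ _ _ _ _).mp (hJ ▸ TwoSidedIdeal.mem_top (x := (1 : S)))
    refine absurd ((Ideal.eq_top_iff_one P).mpr ?_) hP
    have : 1 - x ∈ P := hker (by rw [RingHom.mem_ker, map_sub, map_one, hx1, sub_self])
    simpa using P.add_mem this hx

end TwoSidedIdeal

open Polynomial in
theorem IsIdempotentElem.aeval_smul_X_mul {K A : Type*} [Field K] [Ring A] [Algebra K A] {E : A}
    (hE : IsIdempotentElem E) (μ : K) (g : K[X]) :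
    aeval (μ • E) (X * g) = (μ * g.eval μ) • E := by
  induction g using Polynomial.induction_on' with
  | add g h hg hh => rw [mul_add, map_add, hg, hh, eval_add, mul_add, add_smul]
  | monomial k c =>
    rw [X_mul_monomial, aeval_monomial, _root_.smul_pow, hE.pow_succ_eq, eval_monomial,
      Algebra.algebraMap_eq_smul_one, smul_mul_smul_comm, one_mul, pow_succ]
    ring_nf

section Pi

variable {ι : Type*} [DecidableEq ι]

theorem Pi.single_one_mul_comm {R : ι → Type*} [∀ i, Ring (R i)] (i : ι) (x : ∀ i, R i) :
    Pi.single i 1 * x = x * Pi.single i 1 := by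
  rw [← Pi.single_mul_left, ← Pi.single_mul_right, one_mul, mul_one]

theorem Finset.sum_mul_pi_single_one {R : ι → Type*} [∀ i, Ring (R i)] (x : ∀ i, R i)
    {T : Finset ι} (hT : ∀ i ∉ T, x i = 0) : ∑ i ∈ T, x * Pi.single i 1 = x := by
  funext j
  simp_rw [← Pi.single_mul_right, mul_one, Finset.sum_apply, Finset.sum_pi_single]
  split_ifs with hj
  · rfl
  · exact (hT j hj).symm

open Polynomial in
theorem Subalgebra.pi_single_mem_of_smul_mem {K : Type*} [Field K] {A : ι → Type*}
    [∀ i, Ring (A i)] [∀ i, Algebra K (A i)] {B : Subalgebra K (∀ i, A i)} {E : ∀ i, A i}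
    (hE : ∀ i, IsIdempotentElem (E i)) {μ : ι → K} (hμB : (fun i => μ i • E i) ∈ B)
    (hμfin : (Function.support μ).Finite) {p : ι} (hp : μ p ≠ 0)
    (hμp : ∀ q ≠ p, μ q ≠ 0 → μ q ≠ μ p) : Pi.single p (E p) ∈ B := by
  set g : K[X] := ∏ q ∈ hμfin.toFinset.erase p, (X - C (μ q))
  have hg : g.eval (μ p) ≠ 0 := by
    simp only [g, eval_prod, eval_sub, eval_X, eval_C, Finset.prod_ne_zero_iff, sub_ne_zero]
    intro q hq
    obtain ⟨hqp, hq⟩ := Finset.mem_erase.mp hq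
    exact (hμp q hqp (hμfin.mem_toFinset.mp hq)).symm
  have hgq : ∀ q ≠ p, μ q * g.eval (μ q) = 0 := by
    intro q hqp
    by_cases hq : μ q = 0
    · rw [hq, zero_mul]
    · refine mul_eq_zero_of_right _ ?_
      simp only [g, eval_prod, eval_sub, eval_X, eval_C]
      exact Finset.prod_eq_zero (Finset.mem_erase.mpr ⟨hqp, hμfin.mem_toFinset.mpr hq⟩)
        (sub_self _)
  have hsingle : Pi.single p (E p) =
      aeval (fun i => μ i • E i) (C (μ p * g.eval (μ p))⁻¹ * (X * g)) := by
    funext q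
    rw [map_mul, aeval_C, Pi.mul_apply, aeval_pi_apply₂, (hE q).aeval_smul_X_mul,
      Pi.algebraMap_apply, Algebra.smul_def, ← mul_assoc, ← map_mul, ← Algebra.smul_def]
    rcases eq_or_ne q p with rfl | hqp
    · rw [Pi.single_eq_same, inv_mul_cancel₀ (mul_ne_zero hp hg), one_smul]
    · rw [Pi.single_eq_of_ne hqp, hgq q hqp, mul_zero, zero_smul]
  rw [hsingle]
  exact Algebra.adjoin_le (Set.singleton_subset_iff.mpr hμB) (aeval_mem_adjoin_singleton K _)

end Pi

section CycMat

open Fin.NatCast Fin.CommRing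

variable {F : Type*} [Field F] {n : ℕ} [NeZero n]

theorem cycMat_apply (k l : Fin n) : cycMat F n k l = if l = k + 1 then 1 else 0 := by
  simp [cycMat, Fin.ext_iff, Fin.val_add]

theorem cycMat_pow_apply (s : ℕ) (k l : Fin n) :
    (cycMat F n ^ s) k l = if l = k + (s : Fin n) then 1 else 0 := by
  induction s generalizing l with
  | zero => simp [Matrix.one_apply, eq_comm]
  | succ s ih =>
    rw [pow_succ, Matrix.mul_apply, Fintype.sum_eq_single (k + (s : Fin n)) fun x hx => by
      simp [ih, hx]]
    simp [ih, cycMat_apply, add_assoc]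

theorem e11_eq_single : e11 F n = Matrix.single 0 0 1 := by
  ext k l
  simp only [e11, Matrix.of_apply, Matrix.single_apply, Fin.ext_iff, Fin.val_zero,
    @eq_comm _ 0]

theorem cycMat_pow_mul_e11_mul_cycMat_pow (j k : Fin n) :
    cycMat F n ^ (n - (j : ℕ)) * e11 F n * cycMat F n ^ (k : ℕ) = Matrix.single j k 1 := by
  have hj : (↑(n - (j : ℕ)) : Fin n) = -j := by
    rw [Nat.cast_sub j.is_lt.le, Fin.natCast_self, Fin.cast_val_eq_self, zero_sub]
  ext u v
  have hu : (0 = u + -j) ↔ j = u := by rw [eq_comm, add_neg_eq_zero, eq_comm]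
  rw [e11_eq_single, Matrix.mul_apply, Fintype.sum_eq_single 0 fun x hx => by simp [hx],
    Matrix.mul_single_apply_same]
  simp only [cycMat_pow_apply, hj, Matrix.single_apply, zero_add, Fin.cast_val_eq_self, hu,
    @eq_comm _ v k, ite_mul, one_mul, zero_mul, ite_and]

theorem isIdempotentElem_e11 : IsIdempotentElem (e11 F n) := by
  rw [IsIdempotentElem, e11_eq_single, Matrix.single_mul_single_same, mul_one]

theorem e11_mul_mul_e11 (C : Matrix (Fin n) (Fin n) F) :
    e11 F n * C * e11 F n = C 0 0 • e11 F n := by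
  rw [e11_eq_single, Matrix.single_mul_mul_single, Matrix.smul_single, one_mul, mul_one,
    smul_eq_mul, mul_one]

theorem sum_cycMat_pow_mul_e11_mul_cycMat_pow :
    ∑ j : Fin n, cycMat F n ^ (n - (j : ℕ)) * e11 F n * cycMat F n ^ (j : ℕ) = 1 := by
  simp_rw [cycMat_pow_mul_e11_mul_cycMat_pow, Matrix.sum_single_one]

theorem adjoin_smul_e11_cycMat {c : F} (hc : c ≠ 0) :
    Algebra.adjoin F {c • e11 F n, cycMat F n} = ⊤ := by
  set B := Algebra.adjoin F {c • e11 F n, cycMat F n}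
  have hP : cycMat F n ∈ B := Algebra.subset_adjoin (Set.mem_insert_of_mem _ rfl)
  have hE : e11 F n ∈ B := by
    simpa [smul_smul, hc] using
      B.smul_mem (Algebra.subset_adjoin (Set.mem_insert _ _) : c • e11 F n ∈ B) c⁻¹
  refine eq_top_iff.mpr fun M _ => ?_
  rw [Matrix.matrix_eq_sum_single M]
  refine sum_mem fun j _ => sum_mem fun k _ => ?_
  rw [← mul_one (M j k), ← smul_eq_mul, ← Matrix.smul_single,
    ← cycMat_pow_mul_e11_mul_cycMat_pow]
  exact B.smul_mem (mul_mem (mul_mem (pow_mem hP _) hE) (pow_mem hP _)) _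

end CycMat

section Construction

open Fin.NatCast

variable {F : Type*} [Field F] {a : ℕ → ℕ}

instance Idx.neZero_fst (p : Idx a) : NeZero p.1.1 := ⟨by have := p.2.1; omega⟩

theorem Idx.finite_setOf_fst_lt (a : ℕ → ℕ) (n : ℕ) : {q : Idx a | q.1.1 < n}.Finite := by
  have hS : (⋃ m ∈ Set.Iio n, (fun i => (m, i)) '' Set.Iio (a m)).Finite :=
    (Set.finite_Iio n).biUnion fun m _ => (Set.finite_Iio (a m)).image _
  refine (hS.preimage Subtype.val_injective.injOn).subset fun q hq => ?_
  simp only [Set.mem_preimage, Set.mem_iUnion, Set.mem_image, Set.mem_Iio]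
  exact ⟨q.1.1, hq, q.1.2, q.2.2, rfl⟩

variable {lam : Idx a → F}

theorem elemE_mem_constrB : elemE a lam ∈ ConstrB F a lam :=
  Algebra.subset_adjoin (Set.mem_insert _ _)

theorem elemS_mem_constrB : elemS F a ∈ ConstrB F a lam :=
  Algebra.subset_adjoin (Set.mem_insert_of_mem _ rfl)

theorem elemE_mul_elemS_pow_mul_elemE_apply (m : ℕ) (r : Idx a) :
    (elemE a lam * elemS F a ^ m * elemE a lam) r =
      (if r.1.1 ∣ m then lam r ^ 2 else 0) • e11 F r.1.1 := by
  have hdvd : (0 : Fin r.1.1) = m ↔ r.1.1 ∣ m := by rw [eq_comm, Fin.natCast_eq_zero]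
  simp only [Pi.mul_apply, Pi.pow_apply, elemE, elemS, smul_mul_assoc, mul_smul_comm,
    e11_mul_mul_e11, cycMat_pow_apply, zero_add, hdvd, smul_smul]
  split_ifs <;> ring_nf

theorem ite_fst_eq_smul_e11_mem_constrB {n : ℕ} (hn : 0 < n)
    (hlow : ∀ q : Idx a, q.1.1 < n → Pi.single q 1 ∈ ConstrB F a lam) :
    (fun r : Idx a => (if r.1.1 = n then lam r ^ 2 else 0) • e11 F r.1.1) ∈ ConstrB F a lam := by
  set D := (Idx.finite_setOf_fst_lt a n).toFinset
  have hD : ∑ q ∈ D, Pi.single q 1 ∈ ConstrB F a lam :=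
    sum_mem fun q hq => hlow q ((Idx.finite_setOf_fst_lt a n).mem_toFinset.mp hq)
  convert mul_mem (mul_mem (mul_mem elemE_mem_constrB (pow_mem elemS_mem_constrB n))
    elemE_mem_constrB) (sub_mem (one_mem _) hD) using 1
  funext r
  rw [Pi.mul_apply (elemE a lam * elemS F a ^ n * elemE a lam),
    elemE_mul_elemS_pow_mul_elemE_apply]
  simp only [Pi.sub_apply, Pi.one_apply, Finset.sum_apply, Finset.sum_pi_single, D,
    Set.Finite.mem_toFinset, Set.mem_ofPred_eq]
  by_cases hlt : r.1.1 < n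
  · rw [if_neg hlt.ne, if_pos hlt, sub_self, mul_zero, zero_smul]
  · have hiff : r.1.1 ∣ n ↔ r.1.1 = n :=
      ⟨fun h => le_antisymm (Nat.le_of_dvd hn h) (not_lt.mp hlt), fun h => h ▸ dvd_rfl⟩
    simp only [if_neg hlt, sub_zero, mul_one, hiff]

theorem pi_single_one_mem_of_pi_single_e11_mem {p : Idx a}
    (hp : Pi.single p (e11 F p.1.1) ∈ ConstrB F a lam) : Pi.single p 1 ∈ ConstrB F a lam := by
  have hsum : Pi.single p (1 : Matrix (Fin p.1.1) (Fin p.1.1) F) = ∑ j : Fin p.1.1,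
      elemS F a ^ (p.1.1 - (j : ℕ)) * Pi.single p (e11 F p.1.1) * elemS F a ^ (j : ℕ) := by
    rw [← sum_cycMat_pow_mul_e11_mul_cycMat_pow]
    refine (map_sum (AddMonoidHom.single (fun q : Idx a => Matrix (Fin q.1.1) (Fin q.1.1) F) p)
      _ _).trans (Finset.sum_congr rfl fun j _ => ?_)
    rw [AddMonoidHom.single_apply, ← Pi.single_mul_right, ← Pi.single_mul_left]
    rfl
  rw [hsum]
  exact sum_mem fun j _ =>
    mul_mem (mul_mem (pow_mem elemS_mem_constrB _) hp) (pow_mem elemS_mem_constrB _)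

theorem pi_single_one_mem_constrB (hlam_ne : ∀ p, lam p ≠ 0)
    (hlam : ∀ p q : Idx a, p.1.1 = q.1.1 → p ≠ q → lam p ≠ lam q ∧ lam p ≠ -lam q)
    (p : Idx a) : Pi.single p 1 ∈ ConstrB F a lam := by
  induction p using (measure fun q : Idx a => q.1.1).wf.induction with
  | _ p ih =>
  refine pi_single_one_mem_of_pi_single_e11_mem
    (Subalgebra.pi_single_mem_of_smul_mem (E := fun r => e11 F r.1.1)
      (μ := fun r => if r.1.1 = p.1.1 then lam r ^ 2 else 0) (fun r => isIdempotentElem_e11)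
      (ite_fst_eq_smul_e11_mem_constrB (NeZero.pos _) fun q hq => ih q hq) ?_ ?_ ?_)
  · refine (Idx.finite_setOf_fst_lt a (p.1.1 + 1)).subset fun q hq => ?_
    have hsize : q.1.1 = p.1.1 := by_contra fun h => hq (if_neg h)
    exact Nat.lt_succ_of_le hsize.le
  · simpa using hlam_ne p
  · intro q hqp hq
    have hsize : q.1.1 = p.1.1 := by_contra fun h => hq (if_neg h)
    have hne := hlam q p hsize hqp
    rw [if_pos hsize, if_pos rfl]
    intro hsq
    rcases sq_eq_sq_iff_eq_or_eq_neg.mp hsq with h | h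
    exacts [hne.1 h, hne.2 h]

theorem surjective_evalAlgHom_comp_val_constrB (hlam_ne : ∀ p, lam p ≠ 0) (p : Idx a) :
    Function.Surjective
      ((Pi.evalAlgHom F (fun q : Idx a => Matrix (Fin q.1.1) (Fin q.1.1) F) p).comp
        (ConstrB F a lam).val) := by
  rw [← AlgHom.range_eq_top, AlgHom.range_comp, Subalgebra.range_val, AlgHom.map_adjoin,
    Set.image_pair]
  exact adjoin_smul_e11_cycMat (hlam_ne p)

end Construction

theorem stmt_15_general (F : Type*) [Field F] (a : ℕ → ℕ) (lam : Idx a → F)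
    (hlam_ne : ∀ p, lam p ≠ 0)
    (hlam : ∀ p q : Idx a, p.1.1 = q.1.1 → p ≠ q → lam p ≠ lam q ∧ lam p ≠ -lam q)
    (P : Ideal ↥(ConstrB F a lam))
    (hP2 : ∀ x ∈ P, ∀ b : ↥(ConstrB F a lam), x * b ∈ P)
    (hPne : P ≠ ⊤)
    (hPmax : ∀ Q : Ideal ↥(ConstrB F a lam),
      (∀ x ∈ Q, ∀ b : ↥(ConstrB F a lam), x * b ∈ Q) → P < Q → Q = ⊤)
    (hA0 : ¬ ∀ b : ↥(ConstrB F a lam),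
      {p : Idx a | (b : ConstrA F a) p ≠ 0}.Finite → b ∈ P) :
    ∃ p : Idx a,
      P = RingHom.ker
        (((Pi.evalAlgHom F (fun q : Idx a => Matrix (Fin q.1.1) (Fin q.1.1) F) p).comp
          (ConstrB F a lam).val).toRingHom) ∧
      Function.Surjective
        ((Pi.evalAlgHom F (fun q : Idx a => Matrix (Fin q.1.1) (Fin q.1.1) F) p).comp
          (ConstrB F a lam).val) := by
  have : P.IsTwoSided := ⟨fun b hx => hP2 _ hx b⟩
  let s (q : Idx a) : ConstrB F a lam := ⟨Pi.single q 1, pi_single_one_mem_constrB hlam_ne hlam q⟩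
  obtain ⟨p, hp⟩ : ∃ p, s p ∉ P := by
    by_contra! hs
    refine hA0 fun b hb => ?_
    have hsum : ∑ q ∈ hb.toFinset, b * s q = b := Subtype.ext <| by
      push_cast
      exact Finset.sum_mul_pi_single_one _ fun q hq => by simpa using hq
    exact hsum ▸ sum_mem fun q _ => P.mul_mem_left b (hs q)
  have hθ := surjective_evalAlgHom_comp_val_constrB hlam_ne p
  refine ⟨p, Ideal.eq_ker_of_ker_le hPne hθ fun k hk => ?_, hθ⟩
  refine Ideal.mem_of_mul_eq_zero_of_central
    (fun Q hQ hPQ => hPmax Q (fun x hx b => hQ.mul_mem_of_left b hx) hPQ)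
    (fun t => Subtype.ext (Pi.single_one_mul_comm p t.1).symm) hp (Subtype.ext ?_)
  rw [MulMemClass.coe_mul, ZeroMemClass.coe_zero, ← Pi.single_mul_right, mul_one,
    show k.1 p = 0 from hk, Pi.single_zero]

/-- Let `P` be a maximal two-sided ideal of `B = F⟨e,σ⟩` such that `B/P` is
finite-dimensional over `F` and such that `P` does not contain the ideal `A₀` of finitely
supported elements (recall `A₀ ⊆ B`). Then `P` is the kernel of the restriction to `B` of
one of the projections `θ_{n,i} : A → M_n(F)`; in particular (since this restriction is
surjective) `B/P ≅ M_n(F)`. -/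
theorem stmt_15 (F : Type*) [Field F] [IsAlgClosed F] (a : ℕ → ℕ) (lam : Idx a → F)
    (hlam_ne : ∀ p, lam p ≠ 0)
    (hlam : ∀ p q : Idx a, p.1.1 = q.1.1 → p ≠ q → lam p ≠ lam q ∧ lam p ≠ -lam q)
    (P : Ideal ↥(ConstrB F a lam))
    (hP2 : ∀ x ∈ P, ∀ b : ↥(ConstrB F a lam), x * b ∈ P)
    (hPne : P ≠ ⊤)
    (hPmax : ∀ Q : Ideal ↥(ConstrB F a lam),
      (∀ x ∈ Q, ∀ b : ↥(ConstrB F a lam), x * b ∈ Q) → P < Q → Q = ⊤)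
    (hfin : FiniteDimensional F (↥(ConstrB F a lam) ⧸ P.restrictScalars F))
    (hA0 : ¬ ∀ b : ↥(ConstrB F a lam),
      {p : Idx a | (b : ConstrA F a) p ≠ 0}.Finite → b ∈ P) :
    ∃ p : Idx a,
      P = RingHom.ker
        (((Pi.evalAlgHom F (fun q : Idx a => Matrix (Fin q.1.1) (Fin q.1.1) F) p).comp
          (ConstrB F a lam).val).toRingHom) ∧
      Function.Surjective
        ((Pi.evalAlgHom F (fun q : Idx a => Matrix (Fin q.1.1) (Fin q.1.1) F) p).comp
          (ConstrB F a lam).val) :=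
  stmt_15_general F a lam hlam_ne hlam P hP2 hPne hPmax hA0
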